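/- Let X be an infinite Noetherian T1 topological space and f : X → X a continuous map. Let P : ℕ → X be a complete backward f-branch, i.e., f(P(n+1)) = P(n) for all n ≥ 0. If the forward orbit O_f(P(0)) is dense in X, then the set {P(n) : n ∈ ℕ} is dense in X. -/

import Mathlib

/-- The forward orbit of `x` under `f`: all iterates `f^[n] x` for `n ≥ 0`. -/
def fwdOrbit {X : Type*} (f : X → X) (x : X) : Set X := Set.range fun n => f^[n] x

/-!
The closures of the tails `{P k : k ≥ n}` form a descending chain of closed sets, which
stabilises at some `N` because `X` is Noetherian. Since `f` maps the `(N+1)`-st tail onto the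
`N`-th, the stable closed set is forward invariant under the continuous map `f`; it contains
`P 0 = f^[N] (P N)`, hence the whole forward orbit of `P 0`, hence is all of `X`.
-/

open Set TopologicalSpace

theorem TopologicalSpace.NoetherianSpace.exists_closure_eq_of_antitone {X : Type*}
    [TopologicalSpace X] [NoetherianSpace X] {s : ℕ → Set X} (hs : Antitone s) :
    ∃ N, ∀ n, N ≤ n → closure (s n) = closure (s N) := by
  obtain ⟨N, hN⟩ := WellFoundedLT.antitone_chain_condition
    (f := fun n => Closeds.closure (s n)) fun _ _ hmn => closure_mono (hs hmn)
  exact ⟨N, fun n hn => congrArg SetLike.coe (hN n hn).symm⟩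

section BackwardBranch

variable {X : Type*} {f : X → X} {P : ℕ → X}

theorem antitone_image_Ici (P : ℕ → X) : Antitone fun n => P '' Ici n :=
  fun _ _ hmn => image_mono (Ici_subset_Ici.2 hmn)

theorem iterate_apply_branch (hbranch : ∀ n, f (P (n + 1)) = P n) (n : ℕ) :
    f^[n] (P n) = P 0 := by
  induction n with
  | zero => rfl
  | succ n ih => rw [Function.iterate_succ_apply, hbranch n, ih]

theorem image_image_Ici_succ_of_branch (hbranch : ∀ n, f (P (n + 1)) = P n) (n : ℕ) :
    f '' (P '' Ici (n + 1)) = P '' Ici n := by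
  ext x
  constructor
  · rintro ⟨_, ⟨k, hk, rfl⟩, rfl⟩
    obtain ⟨k, rfl⟩ := Nat.exists_eq_succ_of_ne_zero (Nat.ne_zero_of_lt hk)
    exact ⟨k, Nat.le_of_succ_le_succ hk, (hbranch k).symm⟩
  · rintro ⟨k, hk, rfl⟩
    exact ⟨P (k + 1), ⟨k + 1, Nat.succ_le_succ hk, rfl⟩, hbranch k⟩

theorem mapsTo_closure_image_Ici_of_branch [TopologicalSpace X]
    (hbranch : ∀ n, f (P (n + 1)) = P n) (hf : Continuous f) {N : ℕ}
    (hN : closure (P '' Ici (N + 1)) = closure (P '' Ici N)) :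
    MapsTo f (closure (P '' Ici N)) (closure (P '' Ici N)) := by
  rw [← hN, mapsTo_iff_image_subset]
  calc f '' closure (P '' Ici (N + 1))
      ⊆ closure (f '' (P '' Ici (N + 1))) := image_closure_subset_closure_image hf
    _ = closure (P '' Ici N) := by rw [image_image_Ici_succ_of_branch hbranch]
    _ = closure (P '' Ici (N + 1)) := hN.symm

end BackwardBranch

theorem backward_branch_dense_general {X : Type*} [TopologicalSpace X]
    [TopologicalSpace.NoetherianSpace X] (f : X → X)
    (hf : Continuous f) (P : ℕ → X) (hbranch : ∀ n : ℕ, f (P (n + 1)) = P n)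
    (hdense : Dense (fwdOrbit f (P 0))) : Dense (Set.range P) := by
  obtain ⟨N, hN⟩ := NoetherianSpace.exists_closure_eq_of_antitone (antitone_image_Ici P)
  have hinv := mapsTo_closure_image_Ici_of_branch hbranch hf (hN (N + 1) N.le_succ)
  have hP0 : P 0 ∈ closure (P '' Ici N) := by
    rw [← iterate_apply_branch hbranch N]
    exact hinv.iterate N (subset_closure ⟨N, self_mem_Ici, rfl⟩)
  have horbit : fwdOrbit f (P 0) ⊆ closure (range P) := range_subset_iff.2 fun n =>
    closure_mono (image_subset_range P _) (hinv.iterate n hP0)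
  exact dense_closure.1 (hdense.mono horbit)

/-- On an infinite Noetherian T1 space, a complete backward branch of a point with
dense forward orbit is itself dense. -/
theorem backward_branch_dense {X : Type*} [TopologicalSpace X] [T1Space X]
    [TopologicalSpace.NoetherianSpace X] [Infinite X] (f : X → X)
    (hf : Continuous f) (P : ℕ → X) (hbranch : ∀ n : ℕ, f (P (n + 1)) = P n)
    (hdense : Dense (fwdOrbit f (P 0))) : Dense (Set.range P) :=
  backward_branch_dense_general f hf P hbranch hdense
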